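/- arXiv:2210.12046 — 3 statements merged into one kernel-verified Lean document; each statement's English description precedes it below -/
import Mathlib

section
/- Let (a_n) be a sequence of elements of ℚ̄ and C > 0 a real number such that: for every n ≥ 1 and every 0 ≤ k ≤ n, every complex root of the minimal polynomial of a_k over ℚ has absolute value at most Cⁿ; and for every n ≥ 1 there is a positive integer d ≤ Cⁿ such that d·a₀,…,d·a_n are all algebraic integers. Suppose the power series g(z) = ∑_{n≥0} a_n zⁿ converges for every z ∈ ℂ (so g is entire) and that g satisfies a nontrivial linear differential equation ∑_{j=0}^m p_j(z) g^{(j)}(z) = 0 for all z ∈ ℂ with p₀,…,p_m ∈ ℚ̄[z] not all zero. Then g is a polynomial, i.e., a_n = 0 for all sufficiently large n. -/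
/-!
Expanding the differential equation in the monomials `X ^ k * (d/dX) ^ j` turns it into a linear
recurrence `∑ t, R t (n) * a (n + t) = 0` whose coefficients `R t` are polynomials in `n`, not all
zero. The top nonzero `R τ` vanishes at only finitely many integers, so beyond them the recurrence
can be solved for `a (n + τ)`: all `a n` lie in the number field `L` generated by the coefficients
of the `p j` and finitely many initial `a n`, hence have degree at most `D = [L : ℚ]`.

If `a n ≠ 0`, then `y = d * a n` is a nonzero algebraic integer, so the product of its conjugates
is a nonzero integer. The conjugates of `y` are bounded by `d * C ^ n ≤ C ^ (2 * n)`, which gives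
`1 ≤ ‖a n‖ * C ^ ((2 * D + 1) * n)`. As `g` is entire, `‖a n‖ * ρ ^ n → 0` for every `ρ`, so this
fails for all large `n`.
-/

open Polynomial Finset
open scoped PowerSeries

noncomputable section

section EntirePowerSeries

open FormalMultilinearSeries

variable {𝕜 : Type*} [RCLike 𝕜] {c : ℕ → 𝕜} {f : 𝕜 → 𝕜}

theorem hasFPowerSeriesOnBall_ofScalars_of_forall_hasSum
    (hf : ∀ z, HasSum (fun n ↦ c n * z ^ n) (f z)) :
    HasFPowerSeriesOnBall f (ofScalars 𝕜 c) 0 ⊤ where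
  r_le := by
    refine (radius_eq_top_of_summable_norm _ fun r ↦ ?_).ge
    refine (hf ((r : ℝ) : 𝕜)).summable.norm.congr fun n ↦ ?_
    simp
  r_pos := ENNReal.zero_lt_top
  hasSum {z} _ := by simpa [ofScalars_apply_eq, mul_comm] using hf z

theorem eq_zero_of_forall_hasSum_zero (hc : ∀ z, HasSum (fun n ↦ c n * z ^ n) 0) : c = 0 := by
  have h := (hasFPowerSeriesOnBall_ofScalars_of_forall_hasSum hc).hasFPowerSeriesAt.eq_zero
  exact (ofScalars_series_eq_zero (E := 𝕜)).mp h

theorem hasSum_deriv_of_forall_hasSum (hf : ∀ z, HasSum (fun n ↦ c n * z ^ n) (f z)) (z : 𝕜) :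
    HasSum (fun n ↦ c (n + 1) * (n + 1) * z ^ n) (deriv f z) := by
  have h := ((hasFPowerSeriesOnBall_ofScalars_of_forall_hasSum hf).fderiv.hasSum
    (y := z) (by simp)).mapL (ContinuousLinearMap.apply 𝕜 𝕜 1)
  simp only [zero_add, ContinuousLinearMap.apply_apply, fderiv_apply_one_eq_deriv,
    apply_eq_pow_smul_coeff] at h
  refine h.congr_fun fun n ↦ ?_
  simp only [_root_.smul_apply, derivSeries_coeff_one, coeff_ofScalars, nsmul_eq_mul, Nat.cast_add,
    Nat.cast_one, smul_eq_mul]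
  ring

theorem hasSum_coeff_X_mul {B : 𝕜⟦X⟧} {b z : 𝕜}
    (hB : HasSum (fun n ↦ PowerSeries.coeff n B * z ^ n) b) :
    HasSum (fun n ↦ PowerSeries.coeff n (PowerSeries.X * B) * z ^ n) (z * b) := by
  rw [← hasSum_nat_add_iff' 1]
  simpa [PowerSeries.coeff_succ_X_mul, pow_succ', mul_left_comm] using hB.mul_left z

variable {A : 𝕜⟦X⟧} (hA : ∀ z, HasSum (fun n ↦ PowerSeries.coeff n A * z ^ n) (f z))
include hA

theorem hasSum_coeff_iterate_derivative (j : ℕ) (z : 𝕜) :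
    HasSum (fun n ↦ PowerSeries.coeff n ((d⁄dX 𝕜)^[j] A) * z ^ n) (iteratedDeriv j f z) := by
  induction j generalizing z with
  | zero => simpa using hA z
  | succ j ih =>
    simpa [iteratedDeriv_succ, Function.iterate_succ_apply', PowerSeries.coeff_derivative]
      using hasSum_deriv_of_forall_hasSum ih z

theorem hasSum_coeff_polynomial_mul (p : 𝕜[X]) (z : 𝕜) :
    HasSum (fun n ↦ PowerSeries.coeff n ((p : 𝕜⟦X⟧) * A) * z ^ n) (p.eval z * f z) := by
  induction p using Polynomial.induction_on with
  | C a => simpa [mul_assoc] using (hA z).mul_left a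
  | add p q hp hq => simpa [add_mul] using hp.add hq
  | monomial k a ih =>
    have e : ((C a * X ^ (k + 1) : 𝕜[X]) : 𝕜⟦X⟧) * A =
        PowerSeries.X * (((C a * X ^ k : 𝕜[X]) : 𝕜⟦X⟧) * A) := by
      push_cast
      ring
    rw [e]
    convert hasSum_coeff_X_mul ih using 1
    simp only [eval_mul, eval_C, eval_pow, eval_X]
    ring

theorem sum_mul_iterate_derivative_eq_zero {s : Finset ℕ} {p : ℕ → 𝕜[X]}
    (hode : ∀ z, ∑ j ∈ s, (p j).eval z * iteratedDeriv j f z = 0) :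
    ∑ j ∈ s, (p j : 𝕜⟦X⟧) * (d⁄dX 𝕜)^[j] A = 0 := by
  ext n
  refine congrFun (eq_zero_of_forall_hasSum_zero
    (c := fun n ↦ PowerSeries.coeff n (∑ j ∈ s, (p j : 𝕜⟦X⟧) * (d⁄dX 𝕜)^[j] A)) fun z ↦ ?_) n
  simp only [map_sum, Finset.sum_mul]
  rw [← hode z]
  exact hasSum_sum fun j _ ↦
    hasSum_coeff_polynomial_mul (hasSum_coeff_iterate_derivative hA j) (p j) z

end EntirePowerSeries

section Recurrence

variable {K : Type*} [Field K]

theorem exists_forall_mem_of_recurrence [CharZero K] {T : ℕ} {R : ℕ → K[X]}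
    (hR : ∃ t ≤ T, R t ≠ 0) {a : ℕ → K}
    (ha : ∀ n : ℕ, ∑ t ∈ range (T + 1), (R t).eval (n : K) * a (n + t) = 0) :
    ∃ M, ∀ L : Subfield K, (∀ t n : ℕ, (R t).eval (n : K) ∈ L) →
      (∀ i < M, a i ∈ L) → ∀ n, a n ∈ L := by
  classical
  obtain ⟨t₀, ht₀, hRt₀⟩ := hR
  set τ := Nat.findGreatest (fun t ↦ R t ≠ 0) T
  have hRτ : R τ ≠ 0 := Nat.findGreatest_spec (P := fun t ↦ R t ≠ 0) ht₀ hRt₀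
  have hτT : τ ≤ T := Nat.findGreatest_le T
  have hRabove : ∀ t ∈ Ico (τ + 1) (T + 1), R t = 0 := fun t ht ↦ by
    simp only [mem_Ico] at ht
    simpa using Nat.findGreatest_is_greatest (P := fun t ↦ R t ≠ 0) ht.1 (by omega)
  obtain ⟨N, hN⟩ := ((finite_setOfPred_isRoot hRτ).preimage
    (Nat.cast_injective (R := K)).injOn).bddAbove
  have hsolve : ∀ n, N < n → (R τ).eval (n : K) * a (n + τ) =
      -∑ t ∈ range τ, (R t).eval (n : K) * a (n + t) := fun n hn ↦ by
    have h := ha n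
    rw [← sum_range_add_sum_Ico _ (Nat.succ_le_succ hτT), sum_range_succ,
      sum_eq_zero (s := Ico _ _) fun t ht ↦ by rw [hRabove t ht, eval_zero, zero_mul],
      add_zero] at h
    linear_combination h
  refine ⟨N + 1 + τ, fun L hRL hinit n ↦ ?_⟩
  induction n using Nat.strong_induction_on with
  | _ n ih =>
    rcases lt_or_ge n (N + 1 + τ) with hn | hn
    · exact hinit n hn
    obtain ⟨n, rfl⟩ : ∃ n', n = n' + τ := ⟨n - τ, by omega⟩
    have hne : (R τ).eval (n : K) ≠ 0 := fun h ↦ by have := hN h; omega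
    rw [← inv_mul_cancel_left₀ hne (a (n + τ)), hsolve n (by omega)]
    exact mul_mem (inv_mem (hRL τ n)) <| neg_mem <| sum_mem fun t ht ↦
      mul_mem (hRL t n) (ih _ (by simp only [mem_range] at ht; omega))

/-- In the coefficient of `X ^ (n + b)` of `∑ j, p j * (d/dX)^[j] A`, the monomial
`X ^ k * (d/dX) ^ j` contributes `(n + t).descFactorial j * coeff (n + t) A` with `t = b + j - k`
(`b` bounds the degrees of the `p j`); `recurrencePoly p m b t` collects these contributions. -/
def recurrencePoly (p : ℕ → K[X]) (m b t : ℕ) : K[X] :=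
  ∑ jk ∈ range (m + 1) ×ˢ range (b + 1) with b + jk.1 - jk.2 = t,
    C ((p jk.1).coeff jk.2) * taylor (t : K) (descPochhammer K jk.1)

variable {p : ℕ → K[X]} {m b : ℕ}

theorem recurrencePoly_eval (t n : ℕ) :
    (recurrencePoly p m b t).eval (n : K) =
      ∑ jk ∈ range (m + 1) ×ˢ range (b + 1) with b + jk.1 - jk.2 = t,
        (p jk.1).coeff jk.2 * ((n + t).descFactorial jk.1 : K) := by
  simp [recurrencePoly, eval_finsetSum, taylor_eval, ← Nat.cast_add,
    descPochhammer_eval_eq_descFactorial]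

theorem exists_recurrencePoly_ne_zero (hb : ∀ j ≤ m, (p j).natDegree ≤ b)
    (hp : ∃ j ≤ m, p j ≠ 0) : ∃ t ≤ b + m, recurrencePoly p m b t ≠ 0 := by
  obtain ⟨j₀, hj₀, hpj₀⟩ := hp
  have hk₀ := hb j₀ hj₀
  set t := b + j₀ - (p j₀).natDegree
  refine ⟨t, by omega, fun h0 ↦ ?_⟩
  set f : ℕ × ℕ → K[X] := fun jk ↦
    C ((p jk.1).coeff jk.2) * taylor (t : K) (descPochhammer K jk.1)
  have hdeg : ∀ jk : ℕ × ℕ, (p jk.1).coeff jk.2 ≠ 0 → (f jk).degree = jk.1 := fun jk hc ↦ by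
    rw [degree_C_mul hc, degree_taylor, degree_eq_natDegree (monic_descPochhammer K _).ne_zero,
      descPochhammer_natDegree]
  set s := {jk ∈ range (m + 1) ×ˢ range (b + 1) | b + jk.1 - jk.2 = t}
  have hsum := degree_sum_eq_of_disjoint f s <| by
    rintro jk ⟨hjk, hf⟩ jk' ⟨hjk', hf'⟩ hne heq
    simp only [s, mem_filter, mem_product, mem_range] at hjk hjk'
    have hc : (p jk.1).coeff jk.2 ≠ 0 := fun h ↦ hf (by simp [f, h])
    have hc' : (p jk'.1).coeff jk'.2 ≠ 0 := fun h ↦ hf' (by simp [f, h])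
    have h1 : jk.1 = jk'.1 := by
      simpa [hdeg jk hc, hdeg jk' hc'] using heq
    exact hne (Prod.ext h1 (by omega))
  have hmem : ((j₀, (p j₀).natDegree) : ℕ × ℕ) ∈ s := by
    simp only [s, mem_filter, mem_product, mem_range]
    omega
  have hle := le_sup (f := fun jk ↦ (f jk).degree) hmem
  change ∑ jk ∈ _, f jk = 0 at h0
  rw [← hsum, h0, degree_zero, hdeg _ (by simpa using hpj₀)] at hle
  exact WithBot.coe_ne_bot (le_bot_iff.mp hle)

theorem coeff_polynomial_mul_iterate_derivative {q : K[X]} (hq : q.natDegree ≤ b) {N : ℕ}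
    (hN : b ≤ N) (j : ℕ) (A : K⟦X⟧) :
    PowerSeries.coeff N ((q : K⟦X⟧) * (d⁄dX K)^[j] A) =
      ∑ k ∈ range (b + 1), q.coeff k * ((N - k + 1).ascFactorial j : K) *
        PowerSeries.coeff (N - k + j) A := by
  rw [PowerSeries.coeff_mul, Nat.sum_antidiagonal_eq_sum_range_succ_mk,
    ← sum_subset (range_subset_range.mpr (by omega : b + 1 ≤ N.succ))]
  · refine sum_congr rfl fun k _ ↦ ?_
    rw [Polynomial.coeff_coe, PowerSeries.coeff_iterate_derivative, mul_assoc]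
  · intro k _ hk
    rw [Polynomial.coeff_coe, coeff_eq_zero_of_natDegree_lt (by simp only [mem_range] at hk; omega), zero_mul]

theorem sum_recurrencePoly_eval_mul_coeff (hb : ∀ j ≤ m, (p j).natDegree ≤ b) (A : K⟦X⟧)
    (n : ℕ) :
    ∑ t ∈ range (b + m + 1),
        (recurrencePoly p m b t).eval (n : K) * PowerSeries.coeff (n + t) A =
      PowerSeries.coeff (n + b) (∑ j ∈ range (m + 1), (p j : K⟦X⟧) * (d⁄dX K)^[j] A) := by
  set g : ℕ × ℕ → ℕ := fun jk ↦ b + jk.1 - jk.2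
  have hfiber : ∀ t, (recurrencePoly p m b t).eval (n : K) * PowerSeries.coeff (n + t) A =
      ∑ jk ∈ range (m + 1) ×ˢ range (b + 1) with g jk = t,
        (p jk.1).coeff jk.2 * ((n + g jk).descFactorial jk.1 : K) *
          PowerSeries.coeff (n + g jk) A :=
    fun t ↦ by
      rw [recurrencePoly_eval, sum_mul]
      exact sum_congr rfl fun jk hjk ↦ by rw [(mem_filter.mp hjk).2]
  simp_rw [hfiber]
  rw [sum_fiberwise_of_maps_to
    (fun jk hjk ↦ by simp only [g, mem_product, mem_range] at hjk ⊢; omega), sum_product, map_sum]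
  refine sum_congr rfl fun j hj ↦ ?_
  rw [coeff_polynomial_mul_iterate_derivative (hb j (by simpa [Nat.lt_succ_iff] using hj))
    (by omega)]
  refine sum_congr rfl fun k hk ↦ ?_
  have hk : k ≤ b := by simpa [Nat.lt_succ_iff] using hk
  rw [← Nat.add_descFactorial_eq_ascFactorial, show n + (b + j - k) = n + b - k + j by omega]

theorem exists_forall_coeff_mem_of_sum_mul_iterate_derivative_eq_zero [CharZero K]
    (hp : ∃ j ≤ m, p j ≠ 0) {A : K⟦X⟧}
    (hA : ∑ j ∈ range (m + 1), (p j : K⟦X⟧) * (d⁄dX K)^[j] A = 0) :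
    ∃ M, ∀ L : Subfield K, (∀ j ≤ m, ∀ k, (p j).coeff k ∈ L) →
      (∀ i < M, PowerSeries.coeff i A ∈ L) → ∀ n, PowerSeries.coeff n A ∈ L := by
  set b := (range (m + 1)).sup fun j ↦ (p j).natDegree
  have hb : ∀ j ≤ m, (p j).natDegree ≤ b := fun j hj ↦
    le_sup (f := fun j ↦ (p j).natDegree) (mem_range.mpr (by omega))
  obtain ⟨M, hM⟩ := exists_forall_mem_of_recurrence (exists_recurrencePoly_ne_zero hb hp)
    (a := fun n ↦ PowerSeries.coeff n A) fun n ↦ by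
      rw [sum_recurrencePoly_eval_mul_coeff hb, hA, map_zero]
  refine ⟨M, fun L hpL ↦ hM L fun t n ↦ ?_⟩
  rw [recurrencePoly_eval]
  exact sum_mem fun jk hjk ↦ mul_mem
    (hpL _ (by simp only [mem_filter, mem_product, mem_range] at hjk; omega) _) (natCast_mem L _)

theorem exists_finiteDimensional_forall_coeff_mem [CharZero K] (hp : ∃ j ≤ m, p j ≠ 0)
    (hpalg : ∀ j ≤ m, ∀ k, IsAlgebraic ℚ ((p j).coeff k)) {A : K⟦X⟧}
    (hAalg : ∀ n, IsAlgebraic ℚ (PowerSeries.coeff n A))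
    (hA : ∑ j ∈ range (m + 1), (p j : K⟦X⟧) * (d⁄dX K)^[j] A = 0) :
    ∃ L : IntermediateField ℚ K, FiniteDimensional ℚ L ∧ ∀ n, PowerSeries.coeff n A ∈ L := by
  classical
  obtain ⟨M, hM⟩ := exists_forall_coeff_mem_of_sum_mul_iterate_derivative_eq_zero hp hA
  set S : Finset K := (range (m + 1)).biUnion (fun j ↦ (p j).coeffs) ∪
    (range M).image fun i ↦ PowerSeries.coeff i A
  refine ⟨IntermediateField.adjoin ℚ S, IntermediateField.finiteDimensional_adjoin fun x hx ↦ ?_,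
    hM _ (fun j hj k ↦ ?_) (fun i hi ↦ ?_)⟩
  · simp only [S, coe_union, coe_biUnion, coe_image, Set.mem_union, Set.mem_iUnion,
      Set.mem_image, mem_coe, mem_range, mem_coeffs_iff] at hx
    obtain ⟨j, hj, k, -, rfl⟩ | ⟨i, -, rfl⟩ := hx
    · exact (hpalg j (by omega) k).isIntegral
    · exact (hAalg i).isIntegral
  · by_cases hk : (p j).coeff k = 0
    · rw [hk]; exact zero_mem _
    · exact IntermediateField.subset_adjoin ℚ _ (by
        simp only [S, coe_union, coe_biUnion, Set.mem_union, Set.mem_iUnion, mem_coe, mem_range]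
        exact Or.inl ⟨j, by omega, coeff_mem_coeffs hk⟩)
  · exact IntermediateField.subset_adjoin ℚ _ (by
      simp only [S, coe_union, coe_image, Set.mem_union, Set.mem_image, mem_coe, mem_range]
      exact Or.inr ⟨i, hi, rfl⟩)

end Recurrence

theorem aeval_div_eq_zero_of_aeval_minpoly_mul {K E : Type*} [Field K] [Field E] [Algebra K E]
    {c : K} (hc : c ≠ 0) {x r : E} (hr : aeval r (minpoly K (algebraMap K E c * x)) = 0) :
    aeval (r / algebraMap K E c) (minpoly K x) = 0 := by
  have hc' : algebraMap K E c ≠ 0 := (_root_.map_ne_zero _).mpr hc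
  obtain ⟨q, hq⟩ := minpoly.dvd K _ (scaleRoots_aeval_eq_zero (r := c) (minpoly.aeval K x))
  have h := scaleRoots_eval₂_mul (algebraMap K E) (r / algebraMap K E c) c (p := minpoly K x)
  rw [mul_div_cancel₀ _ hc', ← aeval_def, hq, map_mul, hr, zero_mul, ← aeval_def] at h
  exact (mul_eq_zero.mp h.symm).resolve_left (pow_ne_zero _ hc')

theorem one_le_norm_mul_pow_of_isIntegral {y : ℂ} (hy : y ≠ 0) (hint : IsIntegral ℤ y) {B : ℝ}
    (hB : ∀ z : ℂ, aeval z (minpoly ℚ y) = 0 → ‖z‖ ≤ B) :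
    1 ≤ ‖y‖ * B ^ ((minpoly ℚ y).natDegree - 1) := by
  set Q := (minpoly ℚ y).map (algebraMap ℚ ℂ)
  have hQ : Q.Monic := (minpoly.monic hint.tower_top).map _
  have hQsplits : Q.Splits := IsAlgClosed.splits Q
  have hroots : ∀ z ∈ Q.roots, ‖z‖ ≤ B := fun z hz ↦
    hB z (by simpa [Q, aeval_def, eval_map] using (mem_roots hQ.ne_zero).mp hz)
  have hyQ : y ∈ Q.roots := (mem_roots hQ.ne_zero).mpr (by simp [Q, eval_map, ← aeval_def])
  have hcard : Multiset.card (Q.roots.erase y) = (minpoly ℚ y).natDegree - 1 := by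
    rw [Multiset.card_erase_of_mem hyQ, ← hQsplits.natDegree_eq_card_roots, natDegree_map,
      Nat.pred_eq_sub_one]
  have hrest : ‖(Q.roots.erase y).prod‖ ≤ B ^ ((minpoly ℚ y).natDegree - 1) := by
    rw [← hcard, ← normHom_apply, map_multiset_prod]
    exact Multiset.prod_map_le_pow_card (fun z _ ↦ norm_nonneg z)
      fun z hz ↦ hroots z (Multiset.mem_of_mem_erase hz)
  have hcoeff : 1 ≤ ‖Q.coeff 0‖ := by
    have hk : ((minpoly ℤ y).coeff 0 : ℚ) = (minpoly ℚ y).coeff 0 := by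
      rw [minpoly.isIntegrallyClosed_eq_field_fractions' ℚ hint, coeff_map, eq_intCast]
    have hk0 : (minpoly ℤ y).coeff 0 ≠ 0 := fun h ↦
      minpoly.coeff_zero_ne_zero hint.tower_top hy (by rw [← hk, h, Int.cast_zero])
    have hQk : Q.coeff 0 = ((minpoly ℤ y).coeff 0 : ℂ) := by simp [Q, coeff_map, ← hk]
    rw [hQk, Complex.norm_intCast]
    exact_mod_cast Int.one_le_abs hk0
  calc 1 ≤ ‖Q.coeff 0‖ := hcoeff
    _ = ‖y‖ * ‖(Q.roots.erase y).prod‖ := by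
      rw [hQsplits.coeff_zero_eq_prod_roots_of_monic hQ, ← Multiset.cons_erase hyQ,
        Multiset.prod_cons]
      simp
    _ ≤ _ := by gcongr

theorem natDegree_minpoly_le_finrank {K E : Type*} [Field K] [Field E] [Algebra K E]
    {L : IntermediateField K E} [FiniteDimensional K L] {x : E} (hx : x ∈ L) :
    (minpoly K x).natDegree ≤ Module.finrank K L := by
  rw [← IntermediateField.minpoly_eq ⟨x, hx⟩]
  exact minpoly.natDegree_le _

open Filter in
theorem eventually_eq_zero_of_conj_le_of_den_le {a : ℕ → ℂ} {L : IntermediateField ℚ ℂ}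
    [FiniteDimensional ℚ L] (haL : ∀ n, a n ∈ L) {C : ℝ}
    (hconj : ∀ n, 1 ≤ n → ∀ z : ℂ, aeval z (minpoly ℚ (a n)) = 0 → ‖z‖ ≤ C ^ n)
    (hden : ∀ n, 1 ≤ n → ∃ d : ℕ, 0 < d ∧ (d : ℝ) ≤ C ^ n ∧ IsIntegral ℤ ((d : ℂ) * a n))
    (hsum : ∀ z : ℂ, Summable fun n ↦ a n * z ^ n) :
    ∀ᶠ n in atTop, a n = 0 := by
  have hC : 1 ≤ C := by
    obtain ⟨d, hd, hdC, -⟩ := hden 1 le_rfl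
    exact (Nat.one_le_cast.mpr hd).trans (by simpa using hdC)
  set D := Module.finrank ℚ L
  have hdecay : ∀ᶠ n in atTop, ‖a n‖ * (C ^ (2 * D + 1)) ^ n < 1 := by
    have h := tendsto_zero_iff_norm_tendsto_zero.mp (hsum (C ^ (2 * D + 1) : ℝ)).tendsto_atTop_zero
    refine (h.eventually_lt_const one_pos).mono fun n hn ↦ ?_
    simpa [abs_of_nonneg (zero_le_one.trans hC)] using hn
  filter_upwards [hdecay, eventually_ge_atTop 1] with n hn hn1
  by_contra ha
  obtain ⟨d, hd, hdC, hint⟩ := hden n hn1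
  have hconj_d : ∀ z : ℂ, aeval z (minpoly ℚ ((d : ℂ) * a n)) = 0 → ‖z‖ ≤ C ^ n * C ^ n := by
    intro z hz
    have hd0 : (d : ℚ) ≠ 0 := by positivity
    have := hconj n hn1 _ (aeval_div_eq_zero_of_aeval_minpoly_mul hd0 (by simpa using hz))
    rw [map_natCast, norm_div, Complex.norm_natCast, div_le_iff₀ (by positivity)] at this
    exact this.trans (by gcongr)
  have hdeg : (minpoly ℚ ((d : ℂ) * a n)).natDegree - 1 ≤ D :=
    (Nat.sub_le _ _).trans (natDegree_minpoly_le_finrank (mul_mem (natCast_mem L d) (haL n)))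
  have hlow := one_le_norm_mul_pow_of_isIntegral
    (mul_ne_zero (Nat.cast_ne_zero.mpr hd.ne') ha) hint hconj_d
  have : 1 ≤ ‖a n‖ * (C ^ (2 * D + 1)) ^ n := calc
    1 ≤ ‖(d : ℂ) * a n‖ * (C ^ n * C ^ n) ^ ((minpoly ℚ ((d : ℂ) * a n)).natDegree - 1) := hlow
    _ ≤ (C ^ n * ‖a n‖) * (C ^ n * C ^ n) ^ D := by
      rw [norm_mul, Complex.norm_natCast]
      gcongr
      exact one_le_mul_of_one_le_of_one_le (one_le_pow₀ hC) (one_le_pow₀ hC)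
    _ = ‖a n‖ * (C ^ (2 * D + 1)) ^ n := by ring
  linarith

theorem entire_G_series_is_polynomial_general (a : ℕ → ℂ) (halg : ∀ n, IsAlgebraic ℚ (a n))
    (C : ℝ)
    (hconj : ∀ n : ℕ, 1 ≤ n → ∀ k ≤ n, ∀ z : ℂ,
      (Polynomial.aeval z) (minpoly ℚ (a k)) = 0 → ‖z‖ ≤ C ^ n)
    (hden : ∀ n : ℕ, 1 ≤ n → ∃ d : ℕ, 0 < d ∧ (d : ℝ) ≤ C ^ n ∧
      ∀ k ≤ n, IsIntegral ℤ ((d : ℂ) * a k))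
    (g : ℂ → ℂ) (hg : ∀ z : ℂ, HasSum (fun n : ℕ => a n * z ^ n) (g z))
    (m : ℕ) (p : ℕ → Polynomial ℂ)
    (hpalg : ∀ j k, IsAlgebraic ℚ ((p j).coeff k))
    (hpne : ∃ j ≤ m, p j ≠ 0)
    (hode : ∀ z : ℂ, ∑ j ∈ Finset.range (m + 1), (p j).eval z * iteratedDeriv j g z = 0) :
    ∃ N : ℕ, ∀ n ≥ N, a n = 0 := by
  have hA : ∑ j ∈ range (m + 1), (p j : ℂ⟦X⟧) * (d⁄dX ℂ)^[j] (PowerSeries.mk a) = 0 :=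
    sum_mul_iterate_derivative_eq_zero (by simpa using hg) hode
  obtain ⟨L, _, haL⟩ := exists_finiteDimensional_forall_coeff_mem hpne (fun j _ k ↦ hpalg j k)
    (by simpa using halg) hA
  simp only [PowerSeries.coeff_mk] at haL
  refine Filter.eventually_atTop.mp (eventually_eq_zero_of_conj_le_of_den_le haL
    (fun n hn ↦ hconj n hn n le_rfl) (fun n hn ↦ ?_) fun z ↦ (hg z).summable)
  obtain ⟨d, hd, hdC, hint⟩ := hden n hn
  exact ⟨d, hd, hdC, hint n le_rfl⟩

/-- An entire G-series (a power series with algebraic coefficients satisfying the G-function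
growth and denominator conditions, converging on all of `ℂ`) which is holonomic over
`ℚ̄[z]` is a polynomial. -/
theorem entire_G_series_is_polynomial (a : ℕ → ℂ) (halg : ∀ n, IsAlgebraic ℚ (a n))
    (C : ℝ) (hC : 0 < C)
    (hconj : ∀ n : ℕ, 1 ≤ n → ∀ k ≤ n, ∀ z : ℂ,
      (Polynomial.aeval z) (minpoly ℚ (a k)) = 0 → ‖z‖ ≤ C ^ n)
    (hden : ∀ n : ℕ, 1 ≤ n → ∃ d : ℕ, 0 < d ∧ (d : ℝ) ≤ C ^ n ∧
      ∀ k ≤ n, IsIntegral ℤ ((d : ℂ) * a k))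
    (g : ℂ → ℂ) (hg : ∀ z : ℂ, HasSum (fun n : ℕ => a n * z ^ n) (g z))
    (m : ℕ) (p : ℕ → Polynomial ℂ)
    (hpalg : ∀ j k, IsAlgebraic ℚ ((p j).coeff k))
    (hpne : ∃ j ≤ m, p j ≠ 0)
    (hode : ∀ z : ℂ, ∑ j ∈ Finset.range (m + 1), (p j).eval z * iteratedDeriv j g z = 0) :
    ∃ N : ℕ, ∀ n ≥ N, a n = 0 :=
  entire_G_series_is_polynomial_general a halg C hconj hden g hg m p hpalg hpne hode
end
end

section
/- Let f : ℂ → ℂ be an entire function with f(z) = ∑_{n≥0} (a_n/n!) zⁿ for all z ∈ ℂ, where the complex coefficients satisfy |a_n| ≤ Cⁿ for all n ≥ 1 for some C > 0, and suppose |f(w)| ≤ M·e^{ρ|w|} for all w ∈ ℂ for some M, ρ > 0. Then there is a real R > 0 such that for every real x > R, the Laplace integral ∫₀^∞ f(t)·e^{−tx} dt converges absolutely, the series ∑_{n≥0} a_n x^{−n−1} converges absolutely, and ∫₀^∞ f(t)·e^{−tx} dt = ∑_{n≥0} a_n x^{−n−1}. -/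
/-!
Since `∫₀^∞ tⁿ e^(-xt) dt = n!/x^(n+1)`, the `n`-th term of `f(t) e^(-tx) = ∑ aₙ/n! tⁿ e^(-tx)`
integrates to `aₙ/x^(n+1)`, and the integrals of the norms of the terms, `‖aₙ‖ x^(-n-1)`, form a
series dominated by a geometric one once `x > C`; so the integral of the sum is the sum of the
integrals. Absolute integrability of `f(t) e^(-tx)` comes from the growth bound once `x > ρ`.
-/

open MeasureTheory Set

theorem summable_norm_mul_inv_pow_succ_of_norm_le_pow {E : Type*} [SeminormedAddCommGroup E]
    {a : ℕ → E} {C x : ℝ} (hC : 0 ≤ C) (hCx : C < x) (hbound : ∀ n, 1 ≤ n → ‖a n‖ ≤ C ^ n) :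
    Summable fun n => ‖a n‖ * x⁻¹ ^ (n + 1) := by
  have hx : 0 < x := hC.trans_lt hCx
  have hgeom : Summable fun n => (C * x⁻¹) ^ n :=
    summable_geometric_of_lt_one (by positivity) (by rwa [← div_eq_mul_inv, div_lt_one hx])
  rw [← summable_nat_add_iff 1]
  refine .of_nonneg_of_le (fun n => by positivity) (fun n => ?_)
    (hgeom.mul_right (C * x⁻¹ * x⁻¹))
  calc ‖a (n + 1)‖ * x⁻¹ ^ (n + 1 + 1) ≤ C ^ (n + 1) * x⁻¹ ^ (n + 1 + 1) := by
        gcongr; exact hbound _ n.succ_pos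
    _ = (C * x⁻¹) ^ n * (C * x⁻¹ * x⁻¹) := by ring

theorem integral_pow_mul_exp_neg_mul_Ioi (n : ℕ) {x : ℝ} (hx : 0 < x) :
    ∫ t in Ioi (0 : ℝ), t ^ n * Real.exp (-(x * t)) = n.factorial / x ^ (n + 1) := by
  have h := Real.integral_rpow_mul_exp_neg_mul_Ioi (a := n + 1) (by positivity) hx
  rw [add_sub_cancel_right, Real.Gamma_nat_eq_factorial, ← Nat.cast_succ, Real.rpow_natCast,
    one_div, inv_pow] at h
  refine (setIntegral_congr_fun measurableSet_Ioi fun t _ => ?_).trans (h.trans ?_)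
  · rw [Real.rpow_natCast]
  · rw [div_eq_inv_mul]

theorem integrableOn_pow_mul_exp_neg_mul_Ioi (n : ℕ) {x : ℝ} (hx : 0 < x) :
    IntegrableOn (fun t : ℝ => t ^ n * Real.exp (-(x * t))) (Ioi 0) :=
  Integrable.of_integral_ne_zero <| by
    rw [integral_pow_mul_exp_neg_mul_Ioi n hx]; positivity

theorem integrableOn_mul_exp_neg_mul_Ioi_of_norm_le_exp {f : ℝ → ℂ} (hf : Measurable f)
    {M ρ x : ℝ} (hρx : ρ < x) (hgrowth : ∀ t, ‖f t‖ ≤ M * Real.exp (ρ * |t|)) :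
    IntegrableOn (fun t : ℝ => f t * Complex.exp (-(t * x))) (Ioi 0) := by
  refine Integrable.mono' ((exp_neg_integrableOn_Ioi 0 (sub_pos.2 hρx)).const_mul M)
    (by fun_prop) ?_
  filter_upwards [ae_restrict_mem measurableSet_Ioi] with t (ht : 0 < t)
  rw [norm_mul, ← Complex.ofReal_mul, ← Complex.ofReal_neg, Complex.norm_exp_ofReal]
  calc ‖f t‖ * Real.exp (-(t * x)) ≤ M * Real.exp (ρ * |t|) * Real.exp (-(t * x)) := by
        gcongr; exact hgrowth t
    _ = M * Real.exp (-(x - ρ) * t) := by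
        rw [abs_of_pos ht, mul_assoc, ← Real.exp_add]; ring_nf

theorem hasSum_integral_mul_exp_neg_mul_Ioi {f : ℝ → ℂ} {a : ℕ → ℂ} {x : ℝ} (hx : 0 < x)
    (hsum : ∀ t : ℝ, HasSum (fun n => a n / n.factorial * (t : ℂ) ^ n) (f t))
    (hsummable : Summable fun n => ‖a n‖ * x⁻¹ ^ (n + 1)) :
    HasSum (fun n => a n / (x : ℂ) ^ (n + 1))
      (∫ t in Ioi (0 : ℝ), f t * Complex.exp (-(t * x))) := by
  set g : ℕ → ℝ → ℝ := fun n t => t ^ n * Real.exp (-(x * t))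
  set F : ℕ → ℝ → ℂ := fun n t => a n / n.factorial * (g n t : ℂ)
  have hF_int (n : ℕ) : IntegrableOn (F n) (Ioi 0) :=
    (integrableOn_pow_mul_exp_neg_mul_Ioi n hx).ofReal.const_mul _
  have hF_norm (n : ℕ) : ∫ t in Ioi (0 : ℝ), ‖F n t‖ = ‖a n‖ * x⁻¹ ^ (n + 1) := by
    have hg (t : ℝ) (ht : t ∈ Ioi 0) : ‖F n t‖ = ‖a n‖ / n.factorial * g n t := by
      have : 0 ≤ g n t := by have : (0 : ℝ) < t := ht; positivity
      simp [F, Complex.norm_real, Real.norm_of_nonneg this]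
    rw [setIntegral_congr_fun measurableSet_Ioi hg, integral_const_mul,
      integral_pow_mul_exp_neg_mul_Ioi n hx, inv_pow]
    field_simp
  have hF_integral (n : ℕ) : ∫ t in Ioi (0 : ℝ), F n t = a n / (x : ℂ) ^ (n + 1) := by
    rw [integral_const_mul, integral_complex_ofReal, integral_pow_mul_exp_neg_mul_Ioi n hx]
    have : (n.factorial : ℂ) ≠ 0 := mod_cast n.factorial_ne_zero
    push_cast
    field_simp
  have hF_sum (t : ℝ) : ∑' n, F n t = f t * Complex.exp (-(t * x)) := by
    refine (tsum_congr fun n => ?_).trans ((hsum t).mul_right _).tsum_eq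
    simp only [F, g]
    push_cast
    ring_nf
  have := hasSum_integral_of_summable_integral_norm hF_int (by simpa only [hF_norm])
  simpa only [hF_integral, hF_sum] using this

theorem laplace_transform_eq_series_general (f : ℂ → ℂ) (a : ℕ → ℂ)
    (hsum : ∀ z : ℂ, HasSum (fun n : ℕ => a n / (n.factorial : ℂ) * z ^ n) (f z))
    (C : ℝ) (hC : 0 < C) (hbound : ∀ n : ℕ, 1 ≤ n → ‖a n‖ ≤ C ^ n)
    (M ρ : ℝ)
    (hgrowth : ∀ w : ℂ, ‖f w‖ ≤ M * Real.exp (ρ * ‖w‖)) :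
    ∃ R : ℝ, 0 < R ∧ ∀ x : ℝ, R < x →
      IntegrableOn (fun t : ℝ => f t * Complex.exp (-(t * x))) (Set.Ioi 0) ∧
      Summable (fun n : ℕ => ‖a n‖ * x⁻¹ ^ (n + 1)) ∧
      ∫ t in Set.Ioi (0 : ℝ), f t * Complex.exp (-(t * x)) =
        ∑' n : ℕ, a n / (x : ℂ) ^ (n + 1) := by
  have hmeas : Measurable f :=
    measurable_of_tendsto_metrizable (fun n => by fun_prop)
      (tendsto_pi_nhds.2 fun z => (hsum z).tendsto_sum_nat)
  refine ⟨max C ρ, lt_max_of_lt_left hC, fun x hx => ?_⟩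
  have hCx : C < x := (le_max_left C ρ).trans_lt hx
  have hsummable := summable_norm_mul_inv_pow_succ_of_norm_le_pow hC.le hCx hbound
  refine ⟨?_, hsummable, ?_⟩
  · refine integrableOn_mul_exp_neg_mul_Ioi_of_norm_le_exp (M := M)
      (hmeas.comp Complex.measurable_ofReal) ((le_max_right C ρ).trans_lt hx) fun t => ?_
    simpa using hgrowth t
  · exact (hasSum_integral_mul_exp_neg_mul_Ioi (hC.trans hCx) (fun t => hsum t)
      hsummable).tsum_eq.symm

/-- **Laplace transform of a function of exponential growth.** If `f(z) = ∑ aₙ/n! zⁿ` is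
entire with `|aₙ| ≤ Cⁿ` and `|f(w)| ≤ M·e^(ρ|w|)`, then for all large real `x` the Laplace
integral `∫₀^∞ f(t)e^(−tx) dt` converges absolutely, the series `∑ aₙ x^(−n−1)` converges
absolutely, and the two agree. -/
theorem laplace_transform_eq_series (f : ℂ → ℂ) (a : ℕ → ℂ)
    (hsum : ∀ z : ℂ, HasSum (fun n : ℕ => a n / (n.factorial : ℂ) * z ^ n) (f z))
    (C : ℝ) (hC : 0 < C) (hbound : ∀ n : ℕ, 1 ≤ n → ‖a n‖ ≤ C ^ n)
    (M ρ : ℝ) (hM : 0 < M) (hρ : 0 < ρ)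
    (hgrowth : ∀ w : ℂ, ‖f w‖ ≤ M * Real.exp (ρ * ‖w‖)) :
    ∃ R : ℝ, 0 < R ∧ ∀ x : ℝ, R < x →
      IntegrableOn (fun t : ℝ => f t * Complex.exp (-(t * x))) (Set.Ioi 0) ∧
      Summable (fun n : ℕ => ‖a n‖ * x⁻¹ ^ (n + 1)) ∧
      ∫ t in Set.Ioi (0 : ℝ), f t * Complex.exp (-(t * x)) =
        ∑' n : ℕ, a n / (x : ℂ) ^ (n + 1) :=
  laplace_transform_eq_series_general f a hsum C hC hbound M ρ hgrowth
end

section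
/- Every E-function f is either a polynomial with coefficients in ℚ̄ (i.e., there is P ∈ ℚ̄[z] with f(z) = P(z) for all z ∈ ℂ) or transcendental over ℂ(z) (i.ics., there is no nonzero polynomial Q ∈ ℂ[X,Y] with Q(z, f(z)) = 0 for all z ∈ ℂ). -/
/-!
If `Q(z, f(z)) = 0` for a nonzero `Q ∈ ℂ[X, Y]`, then for large `|z|` the value `f(z)` is a root
of a polynomial in `Y` whose coefficients are polynomials in `z`, with leading coefficient bounded
away from `0`; Cauchy's bound on roots then gives `f(z) = O(|z|ᴺ)`. Since `f` is entire, Cauchy's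
estimates kill its Taylor coefficients beyond `N`, so `f` is the polynomial `∑_{n ≤ N} aₙ/n! zⁿ`.
-/

open scoped BigOperators

noncomputable section

/-- `f` is an E-function with coefficient sequence `a` of algebraic numbers:
`f z = ∑ aₙ/n! zⁿ` everywhere, `f` satisfies a nontrivial linear ODE over `ℚ̄[z]`,
the conjugates of the `aₖ` (k ≤ n) are bounded by `Cⁿ`, and there are common
denominators `d ≤ Cⁿ` for `a₀, …, aₙ`. -/
def IsEFunctionWith (f : ℂ → ℂ) (a : ℕ → ℂ) : Prop :=
  (∀ n, IsAlgebraic ℚ (a n)) ∧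
  (∀ z : ℂ, HasSum (fun n : ℕ => a n / (n.factorial : ℂ) * z ^ n) (f z)) ∧
  (∃ (m : ℕ) (p : ℕ → Polynomial ℂ),
    (∀ j k, IsAlgebraic ℚ ((p j).coeff k)) ∧
    (∃ j ≤ m, p j ≠ 0) ∧
    (∀ z : ℂ, ∑ j ∈ Finset.range (m + 1), (p j).eval z * iteratedDeriv j f z = 0)) ∧
  (∃ C : ℝ, 0 < C ∧
    (∀ n : ℕ, 1 ≤ n → ∀ k ≤ n, ∀ z : ℂ,
      (Polynomial.aeval z) (minpoly ℚ (a k)) = 0 → ‖z‖ ≤ C ^ n) ∧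
    (∀ n : ℕ, 1 ≤ n → ∃ d : ℕ, 0 < d ∧ (d : ℝ) ≤ C ^ n ∧
      ∀ k ≤ n, IsIntegral ℤ ((d : ℂ) * a k)))

/-- `f` is an E-function. -/
def IsEFunction (f : ℂ → ℂ) : Prop :=
  ∃ a : ℕ → ℂ, IsEFunctionWith f a

section

open Filter Asymptotics Bornology Polynomial Nat

namespace FormalMultilinearSeries

variable {𝕜 : Type*} [RCLike 𝕜] {c : ℕ → 𝕜}

theorem ofScalars_radius_eq_top_of_summable (h : ∀ z : 𝕜, Summable fun n => c n * z ^ n) :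
    (ofScalars 𝕜 c).radius = ⊤ := by
  refine ENNReal.eq_top_of_forall_nnreal_le fun r => le_radius_of_tendsto _ (l := 0) ?_
  simpa [ofScalars_norm] using (h ((r : ℝ) : 𝕜)).tendsto_atTop_zero.norm

theorem hasFPowerSeriesOnBall_ofScalars_of_hasSum {f : 𝕜 → 𝕜}
    (h : ∀ z, HasSum (fun n => c n * z ^ n) (f z)) :
    HasFPowerSeriesOnBall f (ofScalars 𝕜 c) 0 ⊤ where
  r_le := (ofScalars_radius_eq_top_of_summable fun z => (h z).summable).ge
  r_pos := ENNReal.zero_lt_top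
  hasSum {y} _ := by simpa [ofScalars_apply_eq, mul_comm] using h y

end FormalMultilinearSeries

section PowerSeries

open FormalMultilinearSeries

variable {𝕜 : Type*} [RCLike 𝕜] {c : ℕ → 𝕜} {f : 𝕜 → 𝕜}

theorem differentiable_of_hasSum_pow (h : ∀ z, HasSum (fun n => c n * z ^ n) (f z)) :
    Differentiable 𝕜 f := fun _ =>
  ((hasFPowerSeriesOnBall_ofScalars_of_hasSum h).analyticAt_of_mem (by simp)).differentiableAt

theorem coeff_eq_iteratedDeriv_div_factorial_of_hasSum_pow
    (h : ∀ z, HasSum (fun n => c n * z ^ n) (f z)) (n : ℕ) :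
    c n = iteratedDeriv n f 0 / n ! := by
  have hf := (hasFPowerSeriesOnBall_ofScalars_of_hasSum h).hasFPowerSeriesAt
  exact congrFun (ofScalars_series_injective 𝕜 𝕜
    (hf.eq_formalMultilinearSeries hf.analyticAt.hasFPowerSeriesAt)) n

end PowerSeries

theorem Differentiable.iteratedDeriv_eq_zero_of_isBigO_pow {F : Type*} [NormedAddCommGroup F]
    [NormedSpace ℂ F] [CompleteSpace F] {f : ℂ → F} (hf : Differentiable ℂ f) {N n : ℕ}
    (hfN : f =O[cobounded ℂ] (· ^ N)) (hn : N < n) : iteratedDeriv n f 0 = 0 := by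
  obtain ⟨C, hC⟩ := hfN.bound
  obtain ⟨r, -, hr⟩ :=
    (Metric.hasBasis_cobounded_compl_closedBall (0 : ℂ)).eventually_iff.mp hC
  have cauchy : ∀ R, max r 0 < R → ‖iteratedDeriv n f 0‖ ≤ n ! * C * (R ^ N / R ^ n) := by
    intro R hR
    have hR0 : 0 < R := (le_max_right r 0).trans_lt hR
    refine (Complex.norm_iteratedDeriv_le_of_forall_mem_sphere_norm_le (C := C * R ^ N) n
      hR0 hf.diffContOnCl fun z hz => ?_).trans_eq (by ring)
    have hzR : ‖z‖ = R := by simpa using hz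
    simpa [hzR] using hr (x := z) (by simp [hzR, (le_max_left r 0).trans_lt hR])
  have hlim : Tendsto (fun R : ℝ => n ! * C * (R ^ N / R ^ n)) atTop (nhds 0) := by
    simpa using (tendsto_pow_div_pow_atTop_zero hn).const_mul ((n ! : ℝ) * C)
  exact norm_le_zero_iff.mp <| ge_of_tendsto hlim <|
    (eventually_gt_atTop (max r 0)).mono cauchy

namespace Polynomial

section NormedRing

variable {R : Type*} [NormedRing R] [NormMulClass R]

theorem isBigO_cobounded_pow_of_natDegree_le {p : R[X]} {N : ℕ} (h : p.natDegree ≤ N) :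
    p.eval =O[cobounded R] (· ^ N) :=
  isEquivalent_cobounded_leading_monomial.isBigO.trans <|
    ((isBigO_refl _ _).const_mul_left _).trans (isBigO_pow_pow_cobounded_of_le h)

theorem isBigO_one_cobounded_eval {p : R[X]} (hp : p ≠ 0) :
    (fun _ => (1 : R)) =O[cobounded R] p.eval := by
  simpa using ((isBigO_pow_pow_cobounded_of_le (Nat.zero_le p.natDegree)).const_mul_right
    (leadingCoeff_ne_zero.mpr hp)).trans_isEquivalent
    isEquivalent_cobounded_leading_monomial.symm

end NormedRing

variable {K : Type*} [NormedField K]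

theorem IsRoot.norm_le_sum_div_add_one {p : K[X]} (hp : p ≠ 0) {a : K} (h : p.IsRoot a) :
    ‖a‖ ≤ (∑ i ∈ Finset.range p.natDegree, ‖p.coeff i‖) / ‖p.leadingCoeff‖ + 1 := by
  have hsup : (Finset.range p.natDegree).sup (fun i => ‖p.coeff i‖₊) ≤
      ∑ i ∈ Finset.range p.natDegree, ‖p.coeff i‖₊ :=
    Finset.sup_le fun i hi =>
      Finset.single_le_sum (f := fun i => ‖p.coeff i‖₊) (fun _ _ => zero_le) hi
  have := (h.norm_lt_cauchyBound hp).le.trans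
    (add_le_add_left (div_le_div_of_nonneg_right hsup zero_le) 1)
  simpa using NNReal.coe_le_coe.mpr this

theorem norm_le_of_evalEval_eq_zero {B : K[X][X]} {z y : K} (hz : B.leadingCoeff.eval z ≠ 0)
    (h : B.evalEval z y = 0) :
    ‖y‖ ≤ (∑ i ∈ Finset.range B.natDegree, ‖(B.coeff i).eval z‖) /
      ‖B.leadingCoeff.eval z‖ + 1 := by
  have hlc : evalRingHom z B.leadingCoeff ≠ 0 := hz
  have hdeg := natDegree_map_of_leadingCoeff_ne_zero (evalRingHom z) hlc
  have hmap : B.map (evalRingHom z) ≠ 0 := by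
    intro h0
    exact hlc (by rw [← leadingCoeff_map_of_leadingCoeff_ne_zero _ hlc, h0, leadingCoeff_zero])
  have hroot : (B.map (evalRingHom z)).IsRoot y := by
    rwa [IsRoot.def, map_evalRingHom_eval]
  simpa [hdeg, leadingCoeff_map_of_leadingCoeff_ne_zero _ hlc] using
    hroot.norm_le_sum_div_add_one hmap

theorem exists_isBigO_cobounded_pow_of_evalEval_eq_zero {B : K[X][X]} (hB : B ≠ 0) {g : K → K}
    (hg : ∀ z, B.evalEval z (g z) = 0) : ∃ N : ℕ, g =O[cobounded K] (· ^ N) := by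
  set N := (Finset.range B.natDegree).sup fun i => (B.coeff i).natDegree
  have hlc := isBigO_one_cobounded_eval (leadingCoeff_ne_zero.mpr hB)
  have hlc_ne : ∀ᶠ z in cobounded K, B.leadingCoeff.eval z ≠ 0 :=
    hlc.eq_zero_imp.mono fun z h h0 => one_ne_zero (h h0)
  have hlc_inv : (fun z => (B.leadingCoeff.eval z)⁻¹) =O[cobounded K] (fun _ => (1 : K)) := by
    simpa using hlc.inv_rev (.of_forall fun _ h => absurd h one_ne_zero)
  have hcoeff : (fun z => ∑ i ∈ Finset.range B.natDegree, ‖(B.coeff i).eval z‖)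
      =O[cobounded K] (· ^ N) :=
    IsBigO.fun_sum fun i hi => (isBigO_cobounded_pow_of_natDegree_le
      (Finset.le_sup (f := fun i => (B.coeff i).natDegree) hi)).norm_left
  have hbound : (fun z => (∑ i ∈ Finset.range B.natDegree, ‖(B.coeff i).eval z‖) /
      ‖B.leadingCoeff.eval z‖ + 1) =O[cobounded K] (· ^ N) := by
    refine IsBigO.add ?_ ?_
    · simpa [div_eq_mul_inv] using hcoeff.mul hlc_inv.norm_left
    · simpa using (isBigO_pow_pow_cobounded_of_le (R := K) (Nat.zero_le N)).norm_left
  refine ⟨N, IsBigO.trans (IsBigO.of_bound' ?_) hbound⟩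
  filter_upwards [hlc_ne] with z hz
  exact (norm_le_of_evalEval_eq_zero hz (hg z)).trans (Real.le_norm_self _)

end Polynomial

theorem exists_polynomial_of_hasSum_pow {R : Type*} [CommSemiring R] [TopologicalSpace R]
    [T2Space R] {c : ℕ → R} {f : R → R} (h : ∀ z, HasSum (fun n => c n * z ^ n) (f z)) {N : ℕ}
    (hc : ∀ n, N < n → c n = 0) : ∃ P : R[X], (∀ n, P.coeff n = c n) ∧ ∀ z, f z = P.eval z := by
  refine ⟨∑ n ∈ Finset.range (N + 1), monomial n (c n), fun n => ?_, fun z => ?_⟩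
  · simp only [finsetSum_coeff, coeff_monomial, Finset.sum_ite_eq', Finset.mem_range]
    split_ifs with hn
    · rfl
    · exact (hc n (by omega)).symm
  have hfin : ∀ n ∉ Finset.range (N + 1), c n * z ^ n = 0 := fun n hn => by
    rw [hc n (by simpa using hn), zero_mul]
  simp [(h z).unique (hasSum_sum_of_ne_finset_zero hfin), eval_finsetSum]

namespace MvPolynomial

variable {R : Type*} [CommRing R]

theorem evalEval_aeval_finTwo (Q : MvPolynomial (Fin 2) R) (x y : R) :
    (aeval ![Polynomial.C Polynomial.X, Polynomial.X] Q : R[X][X]).evalEval x y =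
      eval ![x, y] Q := by
  have hvars : (fun i => aevalAeval x y
      (![Polynomial.C Polynomial.X, Polynomial.X] i : R[X][X])) = ![x, y] := by
    ext i
    fin_cases i <;> simp
  rw [← coe_aevalAeval_eq_evalEval, comp_aeval_apply, hvars]
  rfl

theorem aeval_finTwo_ne_zero [IsDomain R] [Infinite R] {Q : MvPolynomial (Fin 2) R}
    (hQ : Q ≠ 0) :
    (aeval ![Polynomial.C Polynomial.X, Polynomial.X] Q : R[X][X]) ≠ 0 := by
  refine fun h0 => hQ (funext fun v => ?_)
  have hv : v = ![v 0, v 1] := by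
    ext i
    fin_cases i <;> rfl
  rw [hv, ← evalEval_aeval_finTwo, h0, map_zero, evalEval_zero]

end MvPolynomial

end

/-- An E-function is either a polynomial with coefficients in `ℚ̄` or transcendental
over `ℂ(z)`. -/
theorem E_function_polynomial_or_transcendental (f : ℂ → ℂ) (hf : IsEFunction f) :
    (∃ P : Polynomial ℂ, (∀ k, IsAlgebraic ℚ (P.coeff k)) ∧ ∀ z : ℂ, f z = P.eval z) ∨
    (¬ ∃ Q : MvPolynomial (Fin 2) ℂ, Q ≠ 0 ∧
      ∀ z : ℂ, MvPolynomial.eval ![z, f z] Q = 0) := by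
  obtain ⟨a, ha, hsum, -⟩ := hf
  rw [or_iff_not_imp_right, not_not]
  rintro ⟨Q, hQ0, hQf⟩
  obtain ⟨N, hgrowth⟩ := Polynomial.exists_isBigO_cobounded_pow_of_evalEval_eq_zero
    (MvPolynomial.aeval_finTwo_ne_zero hQ0) (g := f)
    fun z => by rw [MvPolynomial.evalEval_aeval_finTwo, hQf]
  have hvanish : ∀ n, N < n → a n / n.factorial = 0 := fun n hn => by
    rw [coeff_eq_iteratedDeriv_div_factorial_of_hasSum_pow hsum,
      (differentiable_of_hasSum_pow hsum).iteratedDeriv_eq_zero_of_isBigO_pow hgrowth hn,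
      zero_div]
  obtain ⟨P, hPcoeff, hPf⟩ := exists_polynomial_of_hasSum_pow hsum hvanish
  refine ⟨P, fun k => ?_, hPf⟩
  simpa [hPcoeff, div_eq_inv_mul, Rat.smul_def] using (ha k).smul ((k.factorial : ℚ)⁻¹)
end
end
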